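/- arXiv:2303.01969 — 5 statements merged into one kernel-verified Lean document; each statement's English description precedes it below -/
import Mathlib

section
/- Let X and Y be 1-uniformly discrete metric spaces with bounded geometry and suppose there is a regular map X → Y. Then for every family F of non-decreasing functions [0,∞) → [0,∞), asdim_F(X) ≤ asdim_F(Y) and ov-asdim_F(X) ≤ ov-asdim_F(Y). -/
open Metric Set

/-- A metric space is 1-uniformly discrete. -/
def UnifDiscrete (X : Type*) [MetricSpace X] : Prop :=
  ∀ x y : X, x ≠ y → 1 ≤ dist x y

/-- Bounded geometry: balls of each radius have uniformly bounded cardinality. -/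
def BddGeom (X : Type*) [MetricSpace X] : Prop :=
  ∀ R : ℝ, ∃ N : ℕ, ∀ (x : X) (s : Finset X), ↑s ⊆ Metric.closedBall x R → s.card ≤ N

/-- A regular map between metric spaces. -/
def IsRegularMap {X Y : Type*} [MetricSpace X] [MetricSpace Y] (f : X → Y) : Prop :=
  ∃ κ : ℕ, 1 ≤ κ ∧ (∀ x x' : X, dist (f x) (f x') ≤ κ * (1 + dist x x')) ∧
    ∀ y : Y, ∃ c : Finset X, c.card ≤ κ ∧ f ⁻¹' Metric.ball y 1 ⊆ ⋃ x ∈ c, Metric.ball x 1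

/-- A quasi-isometric embedding. -/
def IsQIEmbedding {X Y : Type*} [MetricSpace X] [MetricSpace Y] (f : X → Y) : Prop :=
  ∃ L D : ℝ, 1 ≤ L ∧ 0 ≤ D ∧ ∀ x x' : X,
    L⁻¹ * dist x x' - D ≤ dist (f x) (f x') ∧ dist (f x) (f x') ≤ L * dist x x' + D

/-- A coarse Lipschitz map. -/
def CoarseLipschitz {X Y : Type*} [MetricSpace X] [MetricSpace Y] (f : X → Y) : Prop :=
  ∃ K : ℝ, 1 ≤ K ∧ ∀ x x' : X, dist (f x) (f x') ≤ K * dist x x' + K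

/-- The metric of `T` is the graph metric of a 3-regular tree. -/
def IsCubicTreeMetric (T : Type*) [MetricSpace T] : Prop :=
  ∃ G : SimpleGraph T, G.Connected ∧ G.IsAcyclic ∧
    (∀ v : T, (G.neighborSet v).ncard = 3) ∧
    ∀ u v : T, dist u v = (G.dist u v : ℝ)

/-- The metric of `Z` is the graph metric of a connected graph of uniformly bounded degree. -/
def IsBddDegGraphMetric (Z : Type*) [MetricSpace Z] : Prop :=
  ∃ G : SimpleGraph Z, G.Connected ∧
    (∃ D : ℕ, ∀ v : Z, (G.neighborSet v).ncard ≤ D) ∧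
    ∀ u v : Z, dist u v = (G.dist u v : ℝ)

/-- A non-decreasing subexponential function `[0,∞) → [0,∞)`. -/
def SubexpFun (g : ℝ → ℝ) : Prop :=
  MonotoneOn g (Set.Ici 0) ∧ (∀ r : ℝ, 0 ≤ g r) ∧
    Filter.Tendsto (fun r => Real.log (g r) / r) Filter.atTop (nhds 0)

/-- Every ball of radius `r` in `Z` contains at most `g r` points. -/
def HasGrowthBound (Z : Type*) [MetricSpace Z] (g : ℝ → ℝ) : Prop :=
  ∀ (z : Z) (r : ℝ), 0 ≤ r → ∀ s : Finset Z, ↑s ⊆ Metric.closedBall z r → (s.card : ℝ) ≤ g r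

def HasSubexpGrowth (Z : Type*) [MetricSpace Z] : Prop :=
  ∃ g : ℝ → ℝ, SubexpFun g ∧ HasGrowthBound Z g

def HasPolyGrowth (Z : Type*) [MetricSpace Z] : Prop :=
  ∃ (C : ℝ) (d : ℕ), 1 ≤ C ∧ HasGrowthBound Z (fun r => C * r ^ d + C)

/-- Distinct members of the family are at distance at least `r` from each other. -/
def SepFamily {X : Type*} [MetricSpace X] (r : ℝ) (𝒰 : Set (Set X)) : Prop :=
  ∀ U ∈ 𝒰, ∀ V ∈ 𝒰, U ≠ V → ∀ x ∈ U, ∀ y ∈ V, r ≤ dist x y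

/-- A decomposition of `X` into `n+1` colours of `r`-separated pieces. -/
def Decomp {X : Type*} [MetricSpace X] (n : ℕ) (r : ℝ) (𝒰 : Fin (n+1) → Set (Set X)) : Prop :=
  (∀ x : X, ∃ i, ∃ U ∈ 𝒰 i, x ∈ U) ∧ ∀ i, SepFamily r (𝒰 i)

/-- A collection of subsets of `X` has growth uniformly controlled by the family `F`. -/
def FGrowing {X : Type*} [MetricSpace X] (F : Set (ℝ → ℝ)) (𝒰 : Set (Set X)) : Prop :=
  ∃ f ∈ F, ∃ C : ℝ, 1 ≤ C ∧ ∀ U ∈ 𝒰, ∀ (x : X) (r : ℝ), 0 ≤ r →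
    ∀ s : Finset X, ↑s ⊆ U ∩ Metric.closedBall x r → (s.card : ℝ) ≤ C * f (C * r) + C

/-- `asdim_F X ≤ n`. -/
def AsdimLE (F : Set (ℝ → ℝ)) (X : Type*) [MetricSpace X] (n : ℕ) : Prop :=
  ∀ r : ℝ, 0 < r → ∃ 𝒰 : Fin (n+1) → Set (Set X),
    Decomp n r 𝒰 ∧ FGrowing F (⋃ i, 𝒰 i)

/-- Iterated neighbourhoods `N^m_s(Y)` of `Y` with respect to the collection `𝒴`. -/
def iterNbhd {X : Type*} [MetricSpace X] (𝒴 : Set (Set X)) (s : ℝ) : ℕ → Set X → Set X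
  | 0, Y => Y
  | m + 1, Y => ⋃₀ {Y' | Y' ∈ 𝒴 ∧ ∃ x ∈ Y', ∃ z ∈ iterNbhd 𝒴 s m Y, dist x z ≤ s}

/-- `ov-asdim_F X ≤ n`. -/
def OvAsdimLE (F : Set (ℝ → ℝ)) (X : Type*) [MetricSpace X] (n : ℕ) : Prop :=
  ∀ r : ℝ, 0 < r → ∃ 𝒰 : Fin (n+1) → Set (Set X),
    Decomp n r 𝒰 ∧ ∀ s : ℝ, 1 ≤ s → ∀ m : ℕ,
      FGrowing F ((iterNbhd (⋃ i, 𝒰 i) s m) '' (⋃ i, 𝒰 i))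

/-- A family of non-decreasing functions `[0,∞) → [0,∞)`. -/
def NondecrFamily (F : Set (ℝ → ℝ)) : Prop :=
  ∀ f ∈ F, MonotoneOn f (Set.Ici 0) ∧ ∀ r : ℝ, 0 ≤ r → 0 ≤ f r

/-- The family of non-decreasing subexponential functions. -/
def seFamily : Set (ℝ → ℝ) := {g | SubexpFun g}

/-- The family of non-decreasing functions bounded by `C·r^d + C`. -/
def polyFamily (d : ℕ) : Set (ℝ → ℝ) :=
  {f | MonotoneOn f (Set.Ici 0) ∧ (∀ r : ℝ, 0 ≤ f r) ∧
    ∃ C : ℝ, 0 < C ∧ ∀ r : ℝ, 0 ≤ r → f r ≤ C * r ^ d + C}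

/-- `asdim X ≤ n` : classical asymptotic dimension. -/
def ClassicalAsdimLE (X : Type*) [MetricSpace X] (n : ℕ) : Prop :=
  ∀ r : ℝ, 0 < r → ∃ 𝒰 : Fin (n+1) → Set (Set X), Decomp n r 𝒰 ∧
    ∃ B : ℝ, ∀ U ∈ ⋃ i, 𝒰 i, ∀ x ∈ U, ∀ y ∈ U, dist x y ≤ B

section Aux

open Finset in
/-- Fiber-counting: a regular map is at most `κ * N`-to-one on finsets, where `N`
bounds cardinalities of radius-1 balls in `X`. -/
lemma card_le_mul_card_image_of_regular {X Y : Type*} [MetricSpace X] [MetricSpace Y]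
    [DecidableEq X] [DecidableEq Y] {f : X → Y} {κ N : ℕ}
    (hκ : ∀ y : Y, ∃ c : Finset X, c.card ≤ κ ∧
      f ⁻¹' Metric.ball y 1 ⊆ ⋃ x ∈ c, Metric.ball x 1)
    (hN : ∀ (x : X) (s : Finset X), ↑s ⊆ Metric.closedBall x 1 → s.card ≤ N)
    (s : Finset X) : s.card ≤ κ * N * (s.image f).card := by
  have key : ∀ y ∈ s.image f, (s.filter (fun a => f a = y)).card ≤ κ * N := by
    intro y _
    obtain ⟨c, hc, hsub⟩ := hκ y
    set t := s.filter (fun a => f a = y) with ht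
    have hsubt : t ⊆ c.biUnion (fun z => t.filter (fun a => dist a z < 1)) := by
      intro a ha
      have hfa : f a = y := (Finset.mem_filter.mp ha).2
      have : a ∈ f ⁻¹' Metric.ball y 1 := by
        simp [Set.mem_preimage, Metric.mem_ball, hfa]
      obtain ⟨_, ⟨z, rfl⟩, hz⟩ := hsub this
      simp only [Set.mem_iUnion, Metric.mem_ball, exists_prop] at hz
      obtain ⟨hzc, hd⟩ := hz
      exact Finset.mem_biUnion.mpr ⟨z, hzc, Finset.mem_filter.mpr ⟨ha, hd⟩⟩
    calc t.card ≤ (c.biUnion (fun z => t.filter (fun a => dist a z < 1))).card :=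
          Finset.card_le_card hsubt
      _ ≤ ∑ z ∈ c, (t.filter (fun a => dist a z < 1)).card := Finset.card_biUnion_le
      _ ≤ ∑ _z ∈ c, N := by
          refine Finset.sum_le_sum (fun z _ => hN z _ ?_)
          intro a ha
          simp only [Finset.coe_filter, Set.mem_setOf_eq] at ha
          exact Metric.mem_closedBall.mpr (le_of_lt ha.2)
      _ = c.card * N := by rw [Finset.sum_const, smul_eq_mul]
      _ ≤ κ * N := Nat.mul_le_mul_right _ hc
  calc s.card = ∑ y ∈ s.image f, (s.filter (fun a => f a = y)).card :=
      Finset.card_eq_sum_card_fiberwise (fun a ha => Finset.mem_image_of_mem f ha)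
    _ ≤ ∑ _y ∈ s.image f, (κ * N) := Finset.sum_le_sum key
    _ = (s.image f).card * (κ * N) := by rw [Finset.sum_const, smul_eq_mul]
    _ = κ * N * (s.image f).card := by ring

/-- Transfer of the `F`-growing property along a regular map. -/
lemma fgrowing_pullback {X Y : Type*} [MetricSpace X] [MetricSpace Y]
    {f : X → Y} {κ N : ℕ} (hκ1 : 1 ≤ κ)
    (hlip : ∀ x x' : X, dist (f x) (f x') ≤ κ * (1 + dist x x'))
    (hκ : ∀ y : Y, ∃ c : Finset X, c.card ≤ κ ∧
      f ⁻¹' Metric.ball y 1 ⊆ ⋃ x ∈ c, Metric.ball x 1)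
    (hN : ∀ (x : X) (s : Finset X), ↑s ⊆ Metric.closedBall x 1 → s.card ≤ N)
    {F : Set (ℝ → ℝ)} (hF : NondecrFamily F)
    {𝒱 : Set (Set Y)} (h𝒱 : FGrowing F 𝒱)
    {𝒰 : Set (Set X)} (hsub : ∀ U ∈ 𝒰, ∃ V ∈ 𝒱, U ⊆ f ⁻¹' V) :
    FGrowing F 𝒰 := by
  classical
  obtain ⟨g, hgF, C, hC1, hbd⟩ := h𝒱
  obtain ⟨hmono, hgpos⟩ := hF g hgF
  have hκR : (1:ℝ) ≤ (κ : ℝ) := by exact_mod_cast hκ1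
  set K : ℝ := (κ : ℝ) * N with hK
  have hK0 : 0 ≤ K := by positivity
  set C' : ℝ := max (max 1 (2*C*κ)) (max (K*C) (K*(C * g (2*C*κ) + C))) with hC'
  have hC'1 : (1:ℝ) ≤ C' := le_trans (le_max_left 1 _) (le_max_left _ _)
  refine ⟨g, hgF, C', hC'1, ?_⟩
  intro U hU x R hR s hs
  obtain ⟨V, hV, hUV⟩ := hsub U hU
  have hrY : (0:ℝ) ≤ (κ:ℝ) * (1 + R) := by positivity
  have himg : ↑(s.image f) ⊆ V ∩ Metric.closedBall (f x) ((κ:ℝ) * (1 + R)) := by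
    intro y hy
    simp only [Finset.coe_image, Set.mem_image, Finset.mem_coe] at hy
    obtain ⟨a, ha, rfl⟩ := hy
    have haU : a ∈ U ∩ Metric.closedBall x R := hs ha
    refine ⟨hUV haU.1, ?_⟩
    have hd : dist a x ≤ R := Metric.mem_closedBall.mp haU.2
    have := hlip a x
    exact Metric.mem_closedBall.mpr (le_trans this (by nlinarith))
  have himgcard : ((s.image f).card : ℝ) ≤ C * g (C * ((κ:ℝ) * (1 + R))) + C :=
    hbd V hV (f x) ((κ:ℝ) * (1 + R)) hrY (s.image f) himg
  have hcards : (s.card : ℝ) ≤ K * ((s.image f).card : ℝ) := by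
    have := card_le_mul_card_image_of_regular hκ hN s
    have h2 : (s.card : ℝ) ≤ ((κ * N * (s.image f).card : ℕ) : ℝ) := by exact_mod_cast this
    rw [hK]; push_cast at h2 ⊢; linarith
  have hmain : (s.card : ℝ) ≤ K * (C * g (C * ((κ:ℝ) * (1 + R))) + C) := by
    calc (s.card : ℝ) ≤ K * ((s.image f).card : ℝ) := hcards
      _ ≤ K * (C * g (C * ((κ:ℝ) * (1 + R))) + C) := by
          apply mul_le_mul_of_nonneg_left himgcard hK0
  have hgC'R : 0 ≤ g (C' * R) := hgpos _ (by positivity)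
  rcases le_or_gt 1 R with hR1 | hR1
  · -- large radius: C·κ·(1+R) ≤ 2CκR ≤ C'·R
    have hCκ0 : (0:ℝ) ≤ C * (κ:ℝ) := by positivity
    have harg : C * ((κ:ℝ) * (1 + R)) ≤ C' * R := by
      have h2 : C * ((κ:ℝ) * (1 + R)) ≤ 2*C*κ*R := by
        nlinarith [mul_nonneg hCκ0 (by linarith : (0:ℝ) ≤ R - 1)]
      have h3 : 2*C*(κ:ℝ) ≤ C' := le_trans (le_max_right 1 _) (le_max_left _ _)
      nlinarith
    have hg : g (C * ((κ:ℝ) * (1 + R))) ≤ g (C' * R) :=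
      hmono (Set.mem_Ici.mpr (by positivity)) (Set.mem_Ici.mpr (by positivity)) harg
    have hKC : K * C ≤ C' := le_trans (le_max_left _ _) (le_max_right _ _)
    have hKC0 : 0 ≤ K * C := by positivity
    have hgarg : 0 ≤ g (C * ((κ:ℝ) * (1 + R))) := hgpos _ (by positivity)
    calc (s.card : ℝ) ≤ K * (C * g (C * ((κ:ℝ) * (1 + R))) + C) := hmain
      _ = K * C * g (C * ((κ:ℝ) * (1 + R))) + K * C := by ring
      _ ≤ C' * g (C' * R) + C' := by
          have := mul_le_mul hKC hg hgarg (le_trans (by norm_num) hC'1)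
          nlinarith
  · -- small radius: everything is bounded by a constant
    have hCκ0 : (0:ℝ) ≤ C * (κ:ℝ) := by positivity
    have harg : C * ((κ:ℝ) * (1 + R)) ≤ 2*C*κ := by
      nlinarith [mul_nonneg hCκ0 (by linarith : (0:ℝ) ≤ 1 - R)]
    have hg : g (C * ((κ:ℝ) * (1 + R))) ≤ g (2*C*κ) :=
      hmono (Set.mem_Ici.mpr (by positivity)) (Set.mem_Ici.mpr (by positivity)) harg
    have hconst : K * (C * g (2*C*κ) + C) ≤ C' :=
      le_trans (le_max_right (K*C) _) (le_max_right _ _)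
    have h0 : 0 ≤ C' * g (C' * R) := mul_nonneg (by linarith) hgC'R
    calc (s.card : ℝ) ≤ K * (C * g (C * ((κ:ℝ) * (1 + R))) + C) := hmain
      _ ≤ K * (C * g (2*C*κ) + C) := by
          apply mul_le_mul_of_nonneg_left _ hK0
          have : C * g (C * ((κ:ℝ) * (1 + R))) ≤ C * g (2*C*κ) :=
            mul_le_mul_of_nonneg_left hg (by linarith)
          linarith
      _ ≤ C' := hconst
      _ ≤ C' * g (C' * R) + C' := by linarith

/-- Iterated neighbourhoods of pulled-back pieces are contained in pullbacks of
iterated neighbourhoods (with dilated parameter). -/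
lemma iterNbhd_pullback {X Y : Type*} [MetricSpace X] [MetricSpace Y]
    {f : X → Y} {κ : ℕ}
    (hlip : ∀ x x' : X, dist (f x) (f x') ≤ κ * (1 + dist x x'))
    (𝒴 : Set (Set Y)) (s : ℝ) (hs : 0 ≤ s) (m : ℕ) (V : Set Y) :
    iterNbhd ((fun W => f ⁻¹' W) '' 𝒴) s m (f ⁻¹' V) ⊆
      f ⁻¹' (iterNbhd 𝒴 ((κ:ℝ) * (1 + s)) m V) := by
  induction m with
  | zero => exact subset_rfl
  | succ m ih =>
    intro x hx
    obtain ⟨W, ⟨hW𝒴, a, haW, z, hz, hdz⟩, hxW⟩ := hx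
    obtain ⟨V', hV', rfl⟩ := hW𝒴
    refine Set.mem_preimage.mpr (Set.mem_sUnion.mpr ⟨V', ⟨hV', f a, haW, f z, ih hz, ?_⟩, hxW⟩)
    have h1 := hlip a z
    have hκ0 : (0:ℝ) ≤ (κ:ℝ) := by positivity
    nlinarith

end Aux

/-- Monotonicity of `asdim_F` and `ov-asdim_F` under regular maps between
1-uniformly discrete metric spaces with bounded geometry. -/
theorem asdim_mono_of_regular_map
    (X Y : Type*) [MetricSpace X] [MetricSpace Y]
    (hX : UnifDiscrete X) (hY : UnifDiscrete Y)
    (hXb : BddGeom X) (hYb : BddGeom Y)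
    (hreg : ∃ f : X → Y, IsRegularMap f)
    (F : Set (ℝ → ℝ)) (hF : NondecrFamily F) (n : ℕ) :
    (AsdimLE F Y n → AsdimLE F X n) ∧ (OvAsdimLE F Y n → OvAsdimLE F X n) := by
  classical
  obtain ⟨f, κ, hκ1, hlip, hκ⟩ := hreg
  obtain ⟨N, hN⟩ := hXb 1
  have hκR : (1:ℝ) ≤ (κ:ℝ) := by exact_mod_cast hκ1
  -- the pulled-back decomposition is a decomposition
  have hdec : ∀ r : ℝ, 0 < r → ∀ 𝒰 : Fin (n+1) → Set (Set Y),
      Decomp n ((κ:ℝ)*(r+1)) 𝒰 → Decomp n r (fun i => (fun V => f ⁻¹' V) '' (𝒰 i)) := by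
    intro r hr 𝒰 ⟨hcov, hsep⟩
    constructor
    · intro x
      obtain ⟨i, V, hV, hx⟩ := hcov (f x)
      exact ⟨i, _, ⟨V, hV, rfl⟩, hx⟩
    · intro i U hU U' hU' hne x hx y hy
      obtain ⟨V, hV, rfl⟩ := hU
      obtain ⟨V', hV', rfl⟩ := hU'
      have hVV' : V ≠ V' := fun h => hne (by rw [h])
      have h1 := hsep i V hV V' hV' hVV' (f x) hx (f y) hy
      have h2 := hlip x y
      have h3 : (κ:ℝ) * r ≤ (κ:ℝ) * dist x y := by nlinarith
      exact le_of_mul_le_mul_left h3 (by linarith)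
  constructor
  · intro hYa r hr
    obtain ⟨𝒰, hd, hgrow⟩ := hYa ((κ:ℝ)*(r+1)) (by positivity)
    refine ⟨fun i => (fun V => f ⁻¹' V) '' (𝒰 i), hdec r hr 𝒰 hd, ?_⟩
    refine fgrowing_pullback hκ1 hlip hκ (hN) hF hgrow ?_
    intro U hU
    simp only [Set.mem_iUnion, Set.mem_image] at hU
    obtain ⟨i, V, hV, rfl⟩ := hU
    exact ⟨V, Set.mem_iUnion.mpr ⟨i, hV⟩, subset_rfl⟩
  · intro hYov r hr
    obtain ⟨𝒰, hd, hgrow⟩ := hYov ((κ:ℝ)*(r+1)) (by positivity)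
    refine ⟨fun i => (fun V => f ⁻¹' V) '' (𝒰 i), hdec r hr 𝒰 hd, ?_⟩
    intro s hs m
    have hs' : (1:ℝ) ≤ (κ:ℝ) * (1 + s) := by nlinarith
    have hUeq : (⋃ i, (fun V => f ⁻¹' V) '' (𝒰 i)) = (fun V => f ⁻¹' V) '' (⋃ i, 𝒰 i) :=
      (Set.image_iUnion).symm
    refine fgrowing_pullback hκ1 hlip hκ hN hF (hgrow ((κ:ℝ)*(1+s)) hs' m) ?_
    intro W hW
    obtain ⟨U, hU, rfl⟩ := hW
    rw [hUeq] at hU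
    obtain ⟨V, hV, rfl⟩ := hU
    refine ⟨iterNbhd (⋃ i, 𝒰 i) ((κ:ℝ)*(1+s)) m V, Set.mem_image_of_mem _ hV, ?_⟩
    rw [hUeq]
    exact iterNbhd_pullback hlip (⋃ i, 𝒰 i) s (by linarith) m V
end

section
/- Let X and Y be 1-uniformly discrete metric spaces. Suppose there is a regular map f : Y → X and a constant C such that d_X(f(y), f(y')) ≤ C·log(1 + d_Y(y, y')) + C for all y, y' ∈ Y. Then asdim_se(X) ≥ asdim(Y). -/
open Metric Set

open Filter Asymptotics

/-!
Fix a scale `r` and decompose `X` at a scale `R` exceeding the `f`-image of distance `r`. Pull each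
piece `U` back and cut `f⁻¹(U)` into its `r`-chain components; these are `r`-separated, and pieces of
the same colour stay `r`-separated because `f` contracts distances below `r` to distances below `R`.
Along a shortest `r`-chain of length `m` in `f⁻¹(U)` the `m + 1` distinct points map (at most `κ`
to one) into a ball of radius `O(log m)` in `U`, which holds `exp(o(log m)) = o(m)` points. Hence
`m` is bounded independently of the piece, and so is the diameter of every component.
-/

def HasGrowthBoundOn {X : Type*} [MetricSpace X] (S : Set X) (h : ℝ → ℝ) : Prop :=
  ∀ (x : X) (t : ℝ), 0 ≤ t → ∀ s : Finset X, ↑s ⊆ S ∩ closedBall x t → (s.card : ℝ) ≤ h t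

theorem UnifDiscrete.eq_of_dist_lt_one {Y : Type*} [MetricSpace Y] (hY : UnifDiscrete Y)
    {y y' : Y} (h : dist y y' < 1) : y = y' := by
  by_contra hne
  exact (hY y y' hne).not_gt h

theorem IsRegularMap.exists_card_le_mul_card_image {X Y : Type*} [MetricSpace X] [MetricSpace Y]
    [DecidableEq X] {f : Y → X} (hf : IsRegularMap f) (hY : UnifDiscrete Y) :
    ∃ κ : ℕ, ∀ s : Finset Y, s.card ≤ κ * (s.image f).card := by
  obtain ⟨κ, -, -, hball⟩ := hf
  refine ⟨κ, fun s => s.card_le_mul_card_image κ fun x _ => ?_⟩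
  obtain ⟨c, hcκ, hc⟩ := hball x
  refine le_trans (Finset.card_le_card fun z hz => ?_) hcκ
  have hzx : f z ∈ ball x 1 := by simp [(Finset.mem_filter.1 hz).2]
  obtain ⟨y, hy, hzy⟩ := mem_iUnion₂.1 (hc hzx)
  rwa [hY.eq_of_dist_lt_one (mem_ball.1 hzy)]

theorem HasGrowthBoundOn.preimage {X Y : Type*} [MetricSpace X] [MetricSpace Y] [DecidableEq X]
    {f : Y → X} {κ : ℕ} (hκ : ∀ s : Finset Y, s.card ≤ κ * (s.image f).card) {ρ : ℝ → ℝ}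
    (hρ : MonotoneOn ρ (Ici 0)) (hfρ : ∀ y y', dist (f y) (f y') ≤ ρ (dist y y'))
    {U : Set X} {G : ℝ → ℝ} (hU : HasGrowthBoundOn U G) :
    HasGrowthBoundOn (f ⁻¹' U) (fun t => κ * G (ρ t)) := by
  intro y t ht s hs
  have hρt : ρ (dist y y) ≤ ρ t := hρ (by simp) ht (by simpa using ht)
  have himage : ↑(s.image f) ⊆ U ∩ closedBall (f y) (ρ t) := by
    intro x hx
    obtain ⟨z, hz, rfl⟩ := Finset.mem_image.1 hx
    obtain ⟨hzU, hzy⟩ := hs hz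
    exact ⟨hzU, (hfρ z y).trans (hρ dist_nonneg ht (mem_closedBall.1 hzy))⟩
  have hcard := hU (f y) (ρ t) ((dist_nonneg.trans (hfρ y y)).trans hρt) _ himage
  calc (s.card : ℝ) ≤ κ * (s.image f).card := by exact_mod_cast hκ s
    _ ≤ κ * G (ρ t) := by gcongr

section ChainComponents

variable {Y : Type*} [MetricSpace Y]

def chainGraph (S : Set Y) (r : ℝ) : SimpleGraph Y where
  Adj u v := u ≠ v ∧ u ∈ S ∧ v ∈ S ∧ dist u v ≤ r
  symm := ⟨fun _ _ h => ⟨h.1.symm, h.2.2.1, h.2.1, dist_comm (α := Y) _ _ ▸ h.2.2.2⟩⟩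
  loopless := ⟨fun _ h => h.1 rfl⟩

def chainComponents (S : Set Y) (r : ℝ) : Set (Set Y) :=
  (fun y => {z | (chainGraph S r).Reachable y z}) '' S

variable {S : Set Y} {r : ℝ}

theorem chainGraph_adj {u v : Y} :
    (chainGraph S r).Adj u v ↔ u ≠ v ∧ u ∈ S ∧ v ∈ S ∧ dist u v ≤ r :=
  Iff.rfl

theorem chainGraph.reachable_of_dist_le {a b : Y} (ha : a ∈ S) (hb : b ∈ S) (h : dist a b ≤ r) :
    (chainGraph S r).Reachable a b := by
  by_cases hab : a = b
  · exact hab ▸ SimpleGraph.Reachable.refl a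
  · exact SimpleGraph.Adj.reachable (chainGraph_adj.2 ⟨hab, ha, hb, h⟩)

theorem chainGraph.mem_of_mem_support {a b : Y} (ha : a ∈ S) (p : (chainGraph S r).Walk a b) :
    ∀ v ∈ p.support, v ∈ S := by
  induction p with
  | nil => simpa using ha
  | cons hadj _ ih => simpa [ha] using ih (chainGraph_adj.1 hadj).2.2.1

theorem chainGraph.dist_le_length_mul {a b : Y} (p : (chainGraph S r).Walk a b) :
    ∀ v ∈ p.support, dist a v ≤ p.length * r := by
  induction p with
  | nil => simp
  | @cons a c b hadj p ih =>
    obtain ⟨-, -, -, hac⟩ := chainGraph_adj.1 hadj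
    intro v hv
    have hr : 0 ≤ r := dist_nonneg.trans hac
    rcases List.mem_cons.1 hv with rfl | hv
    · simp only [dist_self, SimpleGraph.Walk.length_cons]
      positivity
    · calc dist a v ≤ dist a c + dist c v := dist_triangle a c v
        _ ≤ r + p.length * r := add_le_add hac (ih v hv)
        _ = (p.cons hadj).length * r := by push_cast [SimpleGraph.Walk.length_cons]; ring

/-- A path has `length + 1` distinct points, all within `length * r` of its start. -/
theorem chainGraph.length_add_one_le {h : ℝ → ℝ} (hS : HasGrowthBoundOn S h) (hr : 0 ≤ r)
    {a b : Y} (ha : a ∈ S) (p : (chainGraph S r).Walk a b) (hp : p.IsPath) :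
    (p.length + 1 : ℝ) ≤ h (p.length * r) := by
  classical
  have hsub : ↑p.support.toFinset ⊆ S ∩ closedBall a (p.length * r) := fun v hv => by
    rw [Finset.mem_coe, List.mem_toFinset] at hv
    exact ⟨mem_of_mem_support ha p v hv, mem_closedBall'.2 (dist_le_length_mul p v hv)⟩
  have hcard := hS a _ (by positivity) _ hsub
  rwa [List.toFinset_card_of_nodup hp.support_nodup, SimpleGraph.Walk.length_support,
    Nat.cast_add_one] at hcard

theorem chainGraph.mem_of_reachable {a b : Y} (ha : a ∈ S) (h : (chainGraph S r).Reachable a b) :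
    b ∈ S :=
  h.elim fun p => mem_of_mem_support ha p b p.end_mem_support

theorem subset_of_mem_chainComponents {V : Set Y} (hV : V ∈ chainComponents S r) : V ⊆ S := by
  obtain ⟨y, hy, rfl⟩ := hV
  exact fun _ => chainGraph.mem_of_reachable hy

theorem reachable_of_mem_chainComponents {V : Set Y} (hV : V ∈ chainComponents S r) {a b : Y}
    (ha : a ∈ V) (hb : b ∈ V) : (chainGraph S r).Reachable a b := by
  obtain ⟨y, -, rfl⟩ := hV
  exact SimpleGraph.Reachable.trans (SimpleGraph.Reachable.symm ha) hb

theorem sepFamily_chainComponents : SepFamily r (chainComponents S r) := by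
  rintro _ ⟨y, hy, rfl⟩ _ ⟨y', hy', rfl⟩ hne a (ha : (chainGraph S r).Reachable y a)
    b (hb : (chainGraph S r).Reachable y' b)
  by_contra! hab
  have hyy' : (chainGraph S r).Reachable y y' :=
    (ha.trans (chainGraph.reachable_of_dist_le (chainGraph.mem_of_reachable hy ha)
      (chainGraph.mem_of_reachable hy' hb) hab.le)).trans hb.symm
  exact hne (Set.ext fun z => ⟨hyy'.symm.trans, hyy'.trans⟩)

theorem SepFamily.biUnion_chainComponents_preimage {X : Type*} [MetricSpace X] {f : Y → X}
    {𝒰 : Set (Set X)} {R : ℝ} (h𝒰 : SepFamily R 𝒰)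
    (hf : ∀ a b, dist a b < r → dist (f a) (f b) < R) :
    SepFamily r (⋃ U ∈ 𝒰, chainComponents (f ⁻¹' U) r) := by
  intro V hV V' hV' hne a ha b hb
  obtain ⟨U, hU, hVU⟩ := mem_iUnion₂.1 hV
  obtain ⟨U', hU', hVU'⟩ := mem_iUnion₂.1 hV'
  by_cases hUU' : U = U'
  · subst hUU'
    exact sepFamily_chainComponents V hVU V' hVU' hne a ha b hb
  · by_contra! hab
    exact (hf a b hab).not_ge (h𝒰 U hU U' hU' hUU' _ (subset_of_mem_chainComponents hVU ha) _
      (subset_of_mem_chainComponents hVU' hb))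

/-- Sublinear growth of `S` bounds the length of shortest `r`-chains in `S`. -/
theorem exists_dist_le_of_mem_chainComponents (hr : 0 < r) {h : ℝ → ℝ} (hh : h =o[atTop] id) :
    ∃ D, ∀ S : Set Y, HasGrowthBoundOn S h →
      ∀ V ∈ chainComponents S r, ∀ a ∈ V, ∀ b ∈ V, dist a b ≤ D := by
  obtain ⟨T, hT⟩ := eventually_atTop.1 (hh.def (inv_pos.2 (mul_pos two_pos hr)))
  refine ⟨T, fun S hS V hV a ha b hb => ?_⟩
  obtain ⟨p, hp⟩ := (reachable_of_mem_chainComponents hV ha hb).exists_isPath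
  refine (chainGraph.dist_le_length_mul p b p.end_mem_support).trans (le_of_not_ge fun hTm => ?_)
  have hlong := chainGraph.length_add_one_le hS hr.le (subset_of_mem_chainComponents hV ha) p hp
  have hshort := hT _ hTm
  have hm : (0 : ℝ) ≤ p.length := p.length.cast_nonneg
  rw [Real.norm_eq_abs, Real.norm_eq_abs, id, abs_of_nonneg (mul_nonneg hm hr.le)] at hshort
  have hhalf : (2 * r)⁻¹ * (p.length * r) = p.length / 2 := by field_simp
  linarith [le_abs_self (h (p.length * r))]

end ChainComponents

theorem SubexpFun.eventually_le_exp {g : ℝ → ℝ} (hg : SubexpFun g) {ε : ℝ} (hε : 0 < ε) :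
    ∀ᶠ u in atTop, g u ≤ Real.exp (ε * u) := by
  filter_upwards [hg.2.2.eventually (gt_mem_nhds hε), eventually_gt_atTop 0] with u hlog hu
  rcases (hg.2.1 u).eq_or_lt with hzero | hpos
  · rw [← hzero]
    exact (Real.exp_pos _).le
  · exact (Real.log_le_iff_le_exp hpos).1 ((div_lt_iff₀ hu).1 hlog).le

theorem SubexpFun.isLittleO_comp_log {g : ℝ → ℝ} (hg : SubexpFun g) {a : ℝ} (ha : 0 < a) :
    (fun t => g (a * (Real.log (1 + t) + 1))) =o[atTop] id := by
  have hlog : Tendsto (fun t : ℝ => Real.log (1 + t)) atTop atTop :=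
    Real.tendsto_log_atTop.comp (tendsto_atTop_add_const_left _ 1 tendsto_id)
  have harg : Tendsto (fun t => a * (Real.log (1 + t) + 1)) atTop atTop :=
    (tendsto_atTop_add_const_right _ 1 hlog).const_mul_atTop ha
  have hle : (fun t => g (a * (Real.log (1 + t) + 1))) =O[atTop]
      fun t => Real.exp ((Real.log (1 + t) + 1) / 2) := by
    -- with `ε = (2a)⁻¹`, the bound `exp (ε u)` at `u = a (log (1 + t) + 1)` is `√(e (1 + t))`
    refine IsBigO.of_norm_eventuallyLE ?_
    filter_upwards [harg.eventually (hg.eventually_le_exp (inv_pos.2 (mul_pos two_pos ha)))]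
      with t ht
    rw [Real.norm_of_nonneg (hg.2.1 _)]
    convert ht using 2
    field_simp
  have hexp : (fun t => Real.exp ((Real.log (1 + t) + 1) / 2)) =o[atTop]
      fun t => Real.exp (Real.log (1 + t)) := by
    refine Real.isLittleO_exp_comp_exp_comp.2 ?_
    refine (tendsto_atTop_add_const_right _ (-1 / 2) (hlog.atTop_div_const two_pos)).congr ?_
    intro t
    ring
  have hlin : (fun t => Real.exp (Real.log (1 + t))) =O[atTop] (id : ℝ → ℝ) := by
    refine ((isLittleO_const_id_atTop (1 : ℝ)).isBigO.add (isBigO_refl id atTop)).congr' ?_ .rfl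
    filter_upwards [eventually_gt_atTop (-1)] with t ht
    rw [Real.exp_log (by linarith)]
    rfl
  exact hle.trans_isLittleO (hexp.trans_isBigO hlin)

theorem monotoneOn_const_mul_log_one_add_add_one {c : ℝ} (hc : 0 ≤ c) :
    MonotoneOn (fun t => c * (Real.log (1 + t) + 1)) (Ici 0) := fun s hs t _ hst => by
  have hs : 0 ≤ s := hs
  have := Real.log_nonneg (by linarith : (1 : ℝ) ≤ 1 + s)
  dsimp only
  gcongr

theorem exists_pos_dist_le_const_mul_log_one_add_add_one {X Y : Type*} [MetricSpace X]
    [MetricSpace Y] {f : Y → X} {C : ℝ}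
    (hdist : ∀ y y' : Y, dist (f y) (f y') ≤ C * Real.log (1 + dist y y') + C) :
    ∃ c > 0, ∀ y y', dist (f y) (f y') ≤ c * (Real.log (1 + dist y y') + 1) := by
  refine ⟨max C 1, lt_max_of_lt_right one_pos, fun y y' => ?_⟩
  have := Real.log_nonneg (le_add_of_nonneg_right (dist_nonneg (x := y) (y := y')))
  calc _ ≤ C * (Real.log (1 + dist y y') + 1) := by linarith [hdist y y']
    _ ≤ max C 1 * (Real.log (1 + dist y y') + 1) := by gcongr; exact le_max_left _ _

theorem asdim_se_ge_asdim_of_exp_distorted_general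
    (X Y : Type*) [MetricSpace X] [MetricSpace Y]
    (hY : UnifDiscrete Y)
    (f : Y → X) (hf : IsRegularMap f) (C : ℝ)
    (hdist : ∀ y y' : Y, dist (f y) (f y') ≤ C * Real.log (1 + dist y y') + C)
    (n : ℕ) (hn : AsdimLE seFamily X n) :
    ClassicalAsdimLE Y n := by
  classical
  intro r hr
  obtain ⟨κ, hκ⟩ := hf.exists_card_le_mul_card_image hY
  obtain ⟨c, hc, hfρ⟩ := exists_pos_dist_le_const_mul_log_one_add_add_one hdist
  set ρ : ℝ → ℝ := fun t => c * (Real.log (1 + t) + 1)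
  have hρ : MonotoneOn ρ (Ici 0) := monotoneOn_const_mul_log_one_add_add_one hc.le
  obtain ⟨𝒰, ⟨hcover, hsep⟩, g, hg, C₀, hC₀, hgrow⟩ :=
    hn (ρ r + 1) (by have := Real.log_nonneg (by linarith : (1 : ℝ) ≤ 1 + r); positivity)
  have hsublinear : (fun t => κ * (C₀ * g (C₀ * ρ t) + C₀)) =o[atTop] id := by
    have := SubexpFun.isLittleO_comp_log hg (mul_pos (by linarith) hc)
    simpa only [ρ, mul_assoc] using
      ((this.const_mul_left C₀).add (isLittleO_const_id_atTop C₀)).const_mul_left (κ : ℝ)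
  obtain ⟨D, hD⟩ := exists_dist_le_of_mem_chainComponents (Y := Y) hr hsublinear
  refine ⟨fun i => ⋃ U ∈ 𝒰 i, chainComponents (f ⁻¹' U) r, ⟨fun y => ?_, fun i => ?_⟩, D, ?_⟩
  · obtain ⟨i, U, hU, hyU⟩ := hcover (f y)
    exact ⟨i, _, mem_iUnion₂.2 ⟨U, hU, y, hyU, rfl⟩, SimpleGraph.Reachable.refl y⟩
  · exact (hsep i).biUnion_chainComponents_preimage fun a b hab =>
      (hfρ a b).trans_lt (by linarith [hρ dist_nonneg hr.le hab.le])
  · intro V hV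
    obtain ⟨i, hVi⟩ := mem_iUnion.1 hV
    obtain ⟨U, hU, hVU⟩ := mem_iUnion₂.1 hVi
    exact hD _ (HasGrowthBoundOn.preimage hκ hρ hfρ (hgrow U (mem_iUnion.2 ⟨i, hU⟩))) V hVU

/-- If there is a regular map `f : Y → X` whose image is exponentially
distorted (`d(f y, f y') ≤ C·log(1 + d(y, y')) + C`), then `asdim_se(X) ≥ asdim(Y)`. -/
theorem asdim_se_ge_asdim_of_exp_distorted
    (X Y : Type*) [MetricSpace X] [MetricSpace Y]
    (hX : UnifDiscrete X) (hY : UnifDiscrete Y)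
    (f : Y → X) (hf : IsRegularMap f) (C : ℝ)
    (hdist : ∀ y y' : Y, dist (f y) (f y') ≤ C * Real.log (1 + dist y y') + C)
    (n : ℕ) (hn : AsdimLE seFamily X n) :
    ClassicalAsdimLE Y n :=
  asdim_se_ge_asdim_of_exp_distorted_general X Y hY f hf C hdist n hn
end

section
/- Let (N, d) be a proper metric space (closed balls are compact) which admits a dilation: there exist λ ∈ (0, 1) and a bijection ψ : N → N with d(ψ(x), ψ(x')) = λ·d(x, x') for all x, x' ∈ N. Suppose N admits an open cover 𝒰 with multiplicity at most K + 1 which is radially sublinear with respect to some basepoint n₀, i.e. lim_{m→∞} (1/m) · sup{diam(U) : U ∈ 𝒰, d(n₀, U) ≤ m} = 0. Then the topological covering dimension of N is at most K; concretely, for every compact subset B of N and every open cover 𝓑 of B, there is a collection of open sets, each contained in some member of 𝓑, which covers B and has multiplicity at most K + 1. -/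
open Metric Set

/-- A collection of sets has (0-)multiplicity at most `k`. -/
def MultLE {X : Type*} (𝒰 : Set (Set X)) (k : ℕ) : Prop :=
  ∀ x : X, ∀ s : Finset (Set X), ↑s ⊆ 𝒰 → (∀ U ∈ s, x ∈ U) → s.card ≤ k

/-!
The dilation `ψ` is a contraction, so it has a fixed point `p`, and its inverse `φ` expands
distances by `λ⁻¹`. Pulling `𝒰` back along `φ^[k]` gives an open cover of the same multiplicity
whose members near `B` are images under the similarity `(φ^[k])⁻¹` of members of `𝒰` at distance
`O(λ⁻ᵏ)` from `p`. Radial sublinearity makes those of diameter `o(λ⁻ᵏ)`, so after rescaling by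
`λᵏ` they become smaller than a Lebesgue number of `ℬ` on `B` once `k` is large.
-/

section Multiplicity

variable {X Y : Type*} {k : ℕ}

theorem MultLE.mono {𝒰 𝒱 : Set (Set X)} (h𝒱 : 𝒱 ⊆ 𝒰) (h : MultLE 𝒰 k) : MultLE 𝒱 k :=
  fun x s hs hx => h x s (hs.trans h𝒱) hx

theorem MultLE.preimage {𝒰 : Set (Set Y)} (h : MultLE 𝒰 k) (f : X → Y) :
    MultLE ((f ⁻¹' ·) '' 𝒰) k := by
  classical
  intro x s hs hx
  obtain ⟨t, ht𝒰, rfl⟩ := Finset.subset_set_image_iff.mp hs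
  calc (t.image (f ⁻¹' ·)).card ≤ t.card := Finset.card_image_le
    _ ≤ k := h (f x) t ht𝒰 fun U hU => hx _ (Finset.mem_image_of_mem _ hU)

end Multiplicity

section Dilation

variable {X : Type*} [MetricSpace X]

theorem dist_iterate_of_dist_eq_mul {f : X → X} {c : ℝ}
    (hf : ∀ x y, dist (f x) (f y) = c * dist x y) (k : ℕ) (x y : X) :
    dist (f^[k] x) (f^[k] y) = c ^ k * dist x y := by
  induction k generalizing x y with
  | zero => simp
  | succ k ih => rw [Function.iterate_succ_apply, Function.iterate_succ_apply, ih, hf, pow_succ, mul_assoc]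

theorem Equiv.dist_symm_apply_of_dist_eq_mul {e : X ≃ X} {c : ℝ} (hc : c ≠ 0)
    (he : ∀ x y, dist (e x) (e y) = c * dist x y) (x y : X) :
    dist (e.symm x) (e.symm y) = c⁻¹ * dist x y := by
  rw [eq_inv_mul_iff_mul_eq₀ hc, ← he, e.apply_symm_apply, e.apply_symm_apply]

theorem exists_fixedPt_of_dist_le_mul [CompleteSpace X] [Nonempty X] {f : X → X} {c : ℝ}
    (hc : c < 1) (hf : ∀ x y, dist (f x) (f y) ≤ c * dist x y) : ∃ p, f p = p :=
  have hfc : ContractingWith c.toNNReal f :=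
    ⟨Real.toNNReal_lt_one.mpr hc, LipschitzWith.of_dist_le' hf⟩
  ⟨_, hfc.fixedPoint_isFixedPt⟩

end Dilation

section RadiallySublinear

variable {X : Type*} [MetricSpace X]

def RadiallySublinear (𝒰 : Set (Set X)) (n₀ : X) : Prop :=
  ∀ ε : ℝ, 0 < ε → ∃ M : ℝ, ∀ m : ℝ, M ≤ m →
    ∀ U ∈ 𝒰, (∃ u ∈ U, dist n₀ u ≤ m) → ∀ x ∈ U, ∀ y ∈ U, dist x y ≤ ε * m

theorem RadiallySublinear.exists_dist_le_mul {𝒰 : Set (Set X)} {n₀ : X}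
    (h : RadiallySublinear 𝒰 n₀) (p : X) {R δ : ℝ} (hR : 0 ≤ R) (hδ : 0 < δ) :
    ∃ T, ∀ t, T ≤ t → ∀ U ∈ 𝒰, (∃ u ∈ U, dist p u ≤ t * R) →
      ∀ x ∈ U, ∀ y ∈ U, dist x y ≤ δ * t := by
  set C := dist n₀ p + R + 1
  have hC : 0 < C := by positivity
  obtain ⟨M, hM⟩ := h (δ / C) (by positivity)
  refine ⟨max 1 (M / C), fun t ht U hU ⟨u, huU, hu⟩ x hx y hy => ?_⟩
  have ht1 : 1 ≤ t := le_of_max_le_left ht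
  have hMt : M ≤ t * C := by
    have := le_of_max_le_right ht
    rwa [div_le_iff₀ hC] at this
  have hnu : dist n₀ u ≤ t * C := by
    have := dist_triangle n₀ p u
    nlinarith [dist_nonneg (x := n₀) (y := p)]
  calc dist x y ≤ δ / C * (t * C) := hM _ hMt U hU ⟨u, huU, hnu⟩ x hx y hy
    _ = δ * t := by field_simp

theorem RadiallySublinear.exists_iterate_small {𝒰 : Set (Set X)} {n₀ : X}
    (h : RadiallySublinear 𝒰 n₀) {φ : X → X} {c : ℝ} (hc : 1 < c)
    (hφ : ∀ x y, dist (φ x) (φ y) = c * dist x y) {p : X} (hp : φ p = p)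
    {R δ : ℝ} (hR : 0 ≤ R) (hδ : 0 < δ) :
    ∃ k : ℕ, ∀ U ∈ 𝒰, ∀ x ∈ closedBall p R, ∀ y, φ^[k] x ∈ U → φ^[k] y ∈ U → dist x y ≤ δ := by
  obtain ⟨T, hT⟩ := h.exists_dist_le_mul p hR hδ
  obtain ⟨k, hk⟩ := pow_unbounded_of_one_lt T hc
  refine ⟨k, fun U hU x hx y hxU hyU => ?_⟩
  have hck : 0 < c ^ k := by positivity
  have hpx : dist p (φ^[k] x) ≤ c ^ k * R := by
    rw [← Function.iterate_fixed hp k, dist_iterate_of_dist_eq_mul hφ]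
    exact mul_le_mul_of_nonneg_left (mem_closedBall'.mp hx) hck.le
  have hxy := hT _ hk.le U hU ⟨_, hxU, hpx⟩ _ hxU _ hyU
  rw [dist_iterate_of_dist_eq_mul hφ, mul_comm δ] at hxy
  exact le_of_mul_le_mul_left hxy hck

end RadiallySublinear

/-- A proper metric space admitting a dilation and a radially sublinear
open cover of multiplicity at most `K + 1` has topological covering dimension at most `K`. -/
theorem topdim_le_of_dilation_and_radially_sublinear_cover
    (N : Type*) [MetricSpace N] [ProperSpace N]
    (lam : ℝ) (hlam : lam ∈ Set.Ioo (0 : ℝ) 1) (ψ : N ≃ N)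
    (hψ : ∀ x y : N, dist (ψ x) (ψ y) = lam * dist x y)
    (K : ℕ) (𝒰 : Set (Set N))
    (hopen : ∀ U ∈ 𝒰, IsOpen U)
    (hcover : ∀ x : N, ∃ U ∈ 𝒰, x ∈ U)
    (hmult : MultLE 𝒰 (K + 1))
    (n₀ : N)
    (hsub : ∀ ε : ℝ, 0 < ε → ∃ M : ℝ, ∀ m : ℝ, M ≤ m →
      ∀ U ∈ 𝒰, (∃ u ∈ U, dist n₀ u ≤ m) → ∀ x ∈ U, ∀ y ∈ U, dist x y ≤ ε * m) :
    ∀ B : Set N, IsCompact B → ∀ ℬ : Set (Set N), (∀ b ∈ ℬ, IsOpen b) → B ⊆ ⋃₀ ℬ →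
      ∃ 𝒱 : Set (Set N), (∀ V ∈ 𝒱, IsOpen V ∧ ∃ b ∈ ℬ, V ⊆ b) ∧
        B ⊆ ⋃₀ 𝒱 ∧ MultLE 𝒱 (K + 1) := by
  intro B hB ℬ hℬo hℬc
  obtain ⟨hlam0, hlam1⟩ := hlam
  have : Nonempty N := ⟨n₀⟩
  obtain ⟨p, hp⟩ := exists_fixedPt_of_dist_le_mul hlam1 fun x y => (hψ x y).le
  have hψsymm := ψ.dist_symm_apply_of_dist_eq_mul hlam0.ne' hψ
  have hψsymm_p : ψ.symm p = p := ψ.symm_apply_eq.mpr hp.symm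
  obtain ⟨R, hR, hBR⟩ := hB.isBounded.subset_closedBall_lt 0 p
  obtain ⟨δ, hδ, hδℬ⟩ := lebesgue_number_lemma_of_metric_sUnion hB hℬo hℬc
  obtain ⟨k, hk⟩ := RadiallySublinear.exists_iterate_small hsub (one_lt_inv₀ hlam0 |>.mpr hlam1)
    hψsymm hψsymm_p hR.le (half_pos hδ)
  have hψsymm_cont : Continuous (ψ.symm^[k]) :=
    (LipschitzWith.of_dist_le' fun x y => (hψsymm x y).le).continuous.iterate k
  refine ⟨{V ∈ (ψ.symm^[k] ⁻¹' ·) '' 𝒰 | (V ∩ B).Nonempty}, ?_, ?_,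
    (hmult.preimage _).mono (sep_subset _ _)⟩
  · rintro _ ⟨⟨U, hU, rfl⟩, x, hxU, hxB⟩
    obtain ⟨b, hb, hxb⟩ := hδℬ x hxB
    refine ⟨(hopen U hU).preimage hψsymm_cont, b, hb, fun y hyU => hxb ?_⟩
    rw [mem_ball']
    exact (hk U hU x (hBR hxB) y hxU hyU).trans_lt (half_lt_self hδ)
  · intro x hx
    obtain ⟨U, hU, hxU⟩ := hcover (ψ.symm^[k] x)
    exact ⟨_, ⟨⟨U, hU, rfl⟩, x, hxU, hx⟩, hxU⟩
end

section
/- Let T₃ be the 3-regular tree with its graph metric. There exist a map W : ℤ → T₃ and a constant C such that: d_{T₃}(W(a), W(b)) ≤ |a − b| for all a, b ∈ ℤ; every vertex of T₃ has at most 3 preimages under W; and d_{T₃}(W(0), W(b)) ≤ C·log(1 + |b|) + C for all b ∈ ℤ. -/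
open Metric Set

/-!
The 3-regular tree is modelled on two rooted binary trees whose roots are joined, and any
acyclic graph of minimum degree 3 contains it: a graph homomorphism out of a tree that is
injective on every neighbourhood maps paths to non-backtracking walks, which are paths in a
forest, so it is injective.

In the model, a positive walk runs down the spine of `true`-children of one root; at the
`j`-th spine vertex it first makes a full Euler tour of depth `j` of the `false`-subtree hanging
there. An Euler tour of a binary tree visits every vertex at most three times, and each spine
vertex is visited twice, so no vertex is visited more than three times. By time `n` the walk
has toured trees of total size about `n`, so it has gone down only `O(log n)` spine steps and
tours of depth `O(log n)`. The negative walk does the same in the other half.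
-/

namespace SimpleGraph

variable {V W : Type*} {G : SimpleGraph V} {H : SimpleGraph W}

theorem Walk.IsPath.map_of_injOn_neighborSet (hH : H.IsAcyclic) (f : G →g H)
    (hf : ∀ v, Set.InjOn f (G.neighborSet v)) {u v : V} {p : G.Walk u v} (hp : p.IsPath) :
    (p.map f).IsPath := by
  induction p with
  | nil => simp
  | cons h q ih =>
    rw [Walk.cons_isPath_iff] at hp
    rw [Walk.map_cons, Walk.cons_isPath_iff]
    refine ⟨ih hp.1, fun hmem => ?_⟩
    have hsnd := hH.eq_snd_of_adj_start (ih hp.1) (f.map_adj h).symm hmem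
    cases q with
    | nil => exact (f.map_adj h).ne hsnd
    | cons h' q' =>
      rw [Walk.map_cons, Walk.snd_cons] at hsnd
      rw [hf _ h.symm h' hsnd] at hp
      simp at hp

theorem Hom.injective_of_injOn_neighborSet (hG : G.Preconnected) (hH : H.IsAcyclic)
    (f : G →g H) (hf : ∀ v, Set.InjOn f (G.neighborSet v)) : Function.Injective f := by
  intro u v huv
  obtain ⟨p, hp⟩ := (hG u v).exists_isPath
  have hloop := (Walk.isPath_copy _ rfl huv.symm).mpr (hp.map_of_injOn_neighborSet hH f hf)
  rw [Walk.isPath_iff_nil, ← Walk.length_eq_zero_iff, Walk.length_copy, Walk.length_map] at hloop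
  exact Walk.eq_of_length_eq_zero hloop

end SimpleGraph

namespace CubicTree

def parent : Bool × List Bool → Bool × List Bool
  | (b, []) => (!b, [])
  | (b, _ :: s) => (b, s)

/-- The 3-regular tree: `(b, s)` is the vertex of the half `b` reached from its root `(b, [])`
by the address `s`, read from right to left, and the two roots are each other's parent. -/
def graph : SimpleGraph (Bool × List Bool) := SimpleGraph.fromRel fun u v => v = parent u

lemma parent_ne : ∀ u, parent u ≠ u
  | (b, []) => by simp [parent]
  | (b, x :: s) => by simp [parent]

lemma adj_iff {u v : Bool × List Bool} : graph.Adj u v ↔ v = parent u ∨ u = parent v := by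
  rw [graph, SimpleGraph.fromRel_adj, and_iff_right_iff_imp]
  rintro (rfl | rfl)
  exacts [(parent_ne u).symm, parent_ne v]

lemma adj_parent (u : Bool × List Bool) : graph.Adj u (parent u) := adj_iff.2 (Or.inl rfl)

lemma eq_parent_or_eq_cons_of_adj {u v : Bool × List Bool} (h : graph.Adj u v) :
    v = parent u ∨ ∃ x, v = (u.1, x :: u.2) := by
  rcases adj_iff.1 h with h | rfl
  · exact Or.inl h
  · match v with
    | (b, []) => exact Or.inl (by simp [parent])
    | (b, x :: s) => exact Or.inr ⟨x, rfl⟩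

lemma preconnected : graph.Preconnected := by
  suffices h : ∀ u, graph.Reachable (true, []) u from fun u v => (h u).symm.trans (h v)
  rintro ⟨b, s⟩
  induction s with
  | nil =>
    cases b
    · exact (adj_parent (false, [])).reachable.symm
    · rfl
  | cons x s ih => exact ih.trans (adj_parent (b, x :: s)).reachable.symm

lemma dist_root_le {X : Type*} [PseudoMetricSpace X] {f : Bool × List Bool → X}
    (hf : ∀ u v, graph.Adj u v → dist (f u) (f v) ≤ 1) :
    ∀ u : Bool × List Bool, dist (f (true, [])) (f u) ≤ u.2.length + 1 := by
  rintro ⟨b, s⟩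
  induction s with
  | nil =>
    cases b
    · simpa [parent] using hf _ _ (adj_parent (true, []))
    · simp
  | cons x s ih =>
    calc dist (f (true, [])) (f (b, x :: s))
        ≤ dist (f (true, [])) (f (b, s)) + dist (f (b, s)) (f (b, x :: s)) := dist_triangle ..
      _ ≤ (s.length + 1) + 1 := add_le_add ih (hf _ _ (adj_parent (b, x :: s)).symm)
      _ = (x :: s).length + 1 := by push_cast [List.length_cons]; ring

section Embedding

variable {T : Type*} {G : SimpleGraph T}

lemma exists_injective_adj_ne {v : T} (hv : 3 ≤ (G.neighborSet v).encard) (p : T) :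
    ∃ c : Bool → T, Function.Injective c ∧ ∀ x, G.Adj v (c x) ∧ c x ≠ p := by
  have h2 : 1 < (G.neighborSet v \ {p}).encard := by
    have h := hv.trans (Set.encard_le_encard_sdiff_add_encard (G.neighborSet v) {p})
    rw [Set.encard_singleton] at h
    contrapose! h
    calc (G.neighborSet v \ {p}).encard + 1 ≤ 1 + 1 := add_le_add_left h 1
      _ < 3 := by norm_num
  obtain ⟨y, z, hy, hz, hyz⟩ := Set.one_lt_encard_iff.1 h2
  refine ⟨fun x => cond x y z, fun x x' hxx' => ?_, fun x => ?_⟩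
  · cases x <;> cases x' <;> simp_all [eq_comm]
  · cases x
    exacts [⟨hz.1, hz.2⟩, ⟨hy.1, hy.2⟩]

variable (c : T → T → Bool → T) (r r' : T)

/-- Descends from the vertex `e.1` with parent `e.2` along a word, `c v p` being the children
of `v` away from `p`; returns the vertex reached and its parent. -/
def descend (e : T × T) : List Bool → T × T
  | [] => e
  | x :: s => (c (descend e s).1 (descend e s).2 x, (descend e s).1)

def embed (u : Bool × List Bool) : T := (descend c (cond u.1 (r, r') (r', r)) u.2).1

lemma descend_snd : ∀ u : Bool × List Bool,
    (descend c (cond u.1 (r, r') (r', r)) u.2).2 = embed c r r' (parent u)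
  | (true, []) => rfl
  | (false, []) => rfl
  | (_, _ :: _) => rfl

lemma embed_cons (b x : Bool) (s : List Bool) :
    embed c r r' (b, x :: s) = c (embed c r r' (b, s)) (embed c r r' (parent (b, s))) x := by
  rw [← descend_snd]; rfl

variable {c r r'}

lemma adj_embed_parent (hr : G.Adj r r') (hc : ∀ v p x, G.Adj v (c v p x)) :
    ∀ u, G.Adj (embed c r r' u) (embed c r r' (parent u))
  | (true, []) => hr
  | (false, []) => hr.symm
  | (b, x :: s) => by rw [embed_cons]; exact (hc ..).symm

def embedHom (hr : G.Adj r r') (hc : ∀ v p x, G.Adj v (c v p x)) : graph →g G where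
  toFun := embed c r r'
  map_rel' h := by
    rcases adj_iff.1 h with rfl | rfl
    exacts [adj_embed_parent hr hc _, (adj_embed_parent hr hc _).symm]

lemma injOn_embed_neighborSet (hne : ∀ v p x, c v p x ≠ p)
    (hinj : ∀ v p, Function.Injective (c v p)) (u : Bool × List Bool) :
    Set.InjOn (embed c r r') (graph.neighborSet u) := by
  intro v hv w hw h
  rcases eq_parent_or_eq_cons_of_adj hv with rfl | ⟨x, rfl⟩ <;>
    rcases eq_parent_or_eq_cons_of_adj hw with rfl | ⟨y, rfl⟩ <;>
    simp only [embed_cons] at h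
  · rfl
  · exact (hne _ _ _ h.symm).elim
  · exact (hne _ _ _ h).elim
  · rw [hinj _ _ h]

theorem exists_injective_hom [Nonempty T] (hG : G.IsAcyclic)
    (hdeg : ∀ v, 3 ≤ (G.neighborSet v).encard) : ∃ f : graph →g G, Function.Injective f := by
  obtain ⟨r⟩ := ‹Nonempty T›
  obtain ⟨r', hr⟩ : (G.neighborSet r).Nonempty :=
    Set.nonempty_of_encard_ne_zero fun h => by simpa [h] using hdeg r
  choose c hinj hc using fun v => exists_injective_adj_ne (hdeg v)
  exact ⟨embedHom hr fun v p x => (hc v p x).1, SimpleGraph.Hom.injective_of_injOn_neighborSet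
    preconnected hG _ (injOn_embed_neighborSet (fun v p x => (hc v p x).2) hinj)⟩

end Embedding

def WordAdj (u v : List Bool) : Prop := (∃ x, v = x :: u) ∨ ∃ x, u = x :: v

lemma WordAdj.symm {u v : List Bool} (h : WordAdj u v) : WordAdj v u := Or.symm h

lemma WordAdj.append {u v : List Bool} (h : WordAdj u v) (y : Bool) :
    WordAdj (u ++ [y]) (v ++ [y]) := by
  rcases h with ⟨x, rfl⟩ | ⟨x, rfl⟩
  exacts [Or.inl ⟨x, rfl⟩, Or.inr ⟨x, rfl⟩]

lemma adj_of_wordAdj {u v : List Bool} (h : WordAdj u v) (b : Bool) :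
    graph.Adj (b, u) (b, v) := by
  rcases h with ⟨x, rfl⟩ | ⟨x, rfl⟩
  exacts [(adj_parent (b, x :: u)).symm, adj_parent (b, x :: v)]

def node (A B : List (List Bool)) : List (List Bool) :=
  [] :: A.map (· ++ [false]) ++ [] :: B.map (· ++ [true])

lemma isChain_node {A B : List (List Bool)} (hA : A.IsChain WordAdj) (hB : B.IsChain WordAdj)
    (hA₀ : A.head? = some []) (hA₁ : A.getLast? = some []) (hB₀ : B.head? = some []) :
    (node A B).IsChain WordAdj := by
  have hmap : ∀ (y : Bool) (C : List (List Bool)), C.IsChain WordAdj →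
      (C.map (· ++ [y])).IsChain WordAdj :=
    fun y C hC => List.isChain_map_of_isChain _ (fun u v h => h.append y) hC
  rw [node, List.cons_append, List.isChain_cons, List.isChain_append, List.isChain_cons]
  simp [hA₀, hA₁, hB₀, hmap _ _ hA, hmap _ _ hB, WordAdj]

lemma getLast?_node {A B : List (List Bool)} {u : List Bool} (hB : B.getLast? = some u) :
    (node A B).getLast? = some (u ++ [true]) := by
  rw [node, List.cons_append, List.getLast?_cons, List.getLast?_append, List.getLast?_cons,
    List.getLast?_map, hB]
  simp

lemma count_map_append_singleton (C : List (List Bool)) (p : List Bool) (x y : Bool) :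
    (C.map (· ++ [y])).count (p ++ [x]) = if x = y then C.count p else 0 := by
  split_ifs with h
  · subst h
    exact List.count_map_of_injective _ _ (List.append_left_injective _) p
  · rw [List.count_eq_zero]
    simp [Ne.symm h]

lemma count_node_nil (A B : List (List Bool)) : (node A B).count [] = 2 := by
  have h : ∀ (y : Bool) (C : List (List Bool)), (C.map (· ++ [y])).count [] = 0 := by
    intro y C
    rw [List.count_eq_zero]
    simp
  simp [node, List.count_append, h]

lemma count_node_append (A B : List (List Bool)) (p : List Bool) (x : Bool) :
    (node A B).count (p ++ [x]) = (cond x B A).count p := by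
  cases x <;> simp [node, List.count_append, count_map_append_singleton]

lemma length_le_of_mem_node {A B : List (List Bool)} {n : ℕ} (hA : ∀ p ∈ A, p.length ≤ n)
    (hB : ∀ p ∈ B, p.length ≤ n) : ∀ t ∈ node A B, t.length ≤ n + 1 := by
  simp only [node, List.mem_append, List.mem_cons, List.mem_map]
  rintro t ((rfl | ⟨p, hp, rfl⟩) | rfl | ⟨p, hp, rfl⟩) <;> simp [*]

def eulerTour : ℕ → List (List Bool)
  | 0 => [[]]
  | d + 1 => node (eulerTour d) (eulerTour d) ++ [[]]

lemma eulerTour_head? (d : ℕ) : (eulerTour d).head? = some [] := by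
  cases d <;> rfl

lemma eulerTour_getLast? (d : ℕ) : (eulerTour d).getLast? = some [] := by
  cases d <;> simp [eulerTour]

lemma isChain_eulerTour (d : ℕ) : (eulerTour d).IsChain WordAdj := by
  induction d with
  | zero => simp [eulerTour]
  | succ d ih =>
    rw [eulerTour, List.isChain_append]
    refine ⟨isChain_node ih ih (eulerTour_head? d) (eulerTour_getLast? d) (eulerTour_head? d),
      List.isChain_singleton _, ?_⟩
    simp [getLast?_node (eulerTour_getLast? d), WordAdj]

lemma count_eulerTour_le (d : ℕ) (t : List Bool) : (eulerTour d).count t ≤ 3 := by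
  induction d generalizing t with
  | zero => exact (List.count_le_length ..).trans (by simp [eulerTour])
  | succ d ih =>
    rw [eulerTour, List.count_append]
    rcases t.eq_nil_or_concat' with rfl | ⟨p, x, rfl⟩
    · simp [count_node_nil]
    · rw [count_node_append]
      cases x <;> simpa using ih p

lemma length_eulerTour (d : ℕ) : 2 ^ d ≤ (eulerTour d).length := by
  induction d with
  | zero => simp [eulerTour]
  | succ d ih =>
    simp only [eulerTour, node, List.cons_append, List.append_assoc, List.length_cons,
      List.length_append, List.length_map, List.length_nil, pow_succ]
    omega

lemma length_le_of_mem_eulerTour {d : ℕ} : ∀ t ∈ eulerTour d, t.length ≤ d := by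
  induction d with
  | zero => simp [eulerTour]
  | succ d ih =>
    simp only [eulerTour, List.mem_append, List.mem_singleton]
    rintro t (ht | rfl)
    exacts [length_le_of_mem_node ih ih t ht, by simp]

def spineTour (k : ℕ) : ℕ → List (List Bool)
  | 0 => [[]]
  | K + 1 => node (eulerTour k) (spineTour (k + 1) K)

lemma spineTour_head? (k K : ℕ) : (spineTour k K).head? = some [] := by
  cases K <;> rfl

lemma isChain_spineTour (k K : ℕ) : (spineTour k K).IsChain WordAdj := by
  induction K generalizing k with
  | zero => simp [spineTour]
  | succ K ih =>
    exact isChain_node (isChain_eulerTour k) (ih (k + 1)) (eulerTour_head? k)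
      (eulerTour_getLast? k) (spineTour_head? (k + 1) K)

lemma count_spineTour_le (k K : ℕ) (t : List Bool) : (spineTour k K).count t ≤ 3 := by
  induction K generalizing k t with
  | zero => exact (List.count_le_length ..).trans (by simp [spineTour])
  | succ K ih =>
    rw [spineTour]
    rcases t.eq_nil_or_concat' with rfl | ⟨p, x, rfl⟩
    · simp [count_node_nil]
    · rw [count_node_append]
      cases x
      exacts [count_eulerTour_le k p, ih (k + 1) p]

lemma length_spineTour (k K : ℕ) : 2 ^ (k + K) ≤ (spineTour k (K + 1)).length := by
  induction K generalizing k with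
  | zero => simpa [spineTour, node] using (length_eulerTour k).trans (by omega)
  | succ K ih =>
    have := ih (k + 1)
    rw [spineTour]
    simp only [node, List.length_cons, List.length_append, List.length_map]
    rw [show k + (K + 1) = k + 1 + K by omega]
    omega

lemma length_le_of_mem_spineTour {k K : ℕ} : ∀ t ∈ spineTour k K, t.length ≤ k + 2 * K := by
  induction K generalizing k with
  | zero => simp [spineTour]
  | succ K ih =>
    refine fun t ht => (length_le_of_mem_node (n := k + 1 + 2 * K) ?_ ih t ht).trans (by omega)
    exact fun p hp => (length_le_of_mem_eulerTour p hp).trans (by omega)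

lemma spineTour_prefix_succ (k K : ℕ) : spineTour k K <+: spineTour k (K + 1) := by
  induction K generalizing k with
  | zero => simp [spineTour, node]
  | succ K ih =>
    simp only [spineTour, node, List.cons_append, List.cons_prefix_cons,
      List.prefix_append_right_inj, true_and]
    exact (ih (k + 1)).map _

lemma spineTour_prefix_of_le (k : ℕ) {K K' : ℕ} (h : K ≤ K') :
    spineTour k K <+: spineTour k K' := by
  induction K', h using Nat.le_induction with
  | base => exact List.prefix_refl _
  | succ K' _ ih => exact ih.trans (spineTour_prefix_succ k K')

lemma lt_length_spineTour (n : ℕ) : n < (spineTour 0 (n + 1)).length :=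
  Nat.lt_two_pow_self.trans_le (by simpa using length_spineTour 0 n)

/-- The limit of the tours `spineTour 0 K`, each of which is a prefix of the next. -/
def spineWalk (n : ℕ) : List Bool := (spineTour 0 (n + 1)).getD n []

lemma spineWalk_eq_getElem {n K : ℕ} (hn : n < (spineTour 0 K).length) :
    spineWalk n = (spineTour 0 K)[n] := by
  rw [spineWalk, List.getD_eq_getElem _ _ (lt_length_spineTour n)]
  rcases le_total K (n + 1) with h | h
  · exact ((spineTour_prefix_of_le 0 h).getElem hn).symm
  · exact (spineTour_prefix_of_le 0 h).getElem _

lemma wordAdj_spineWalk_succ (n : ℕ) : WordAdj (spineWalk n) (spineWalk (n + 1)) := by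
  have hn := lt_length_spineTour (n + 1)
  rw [spineWalk_eq_getElem hn, spineWalk_eq_getElem (K := n + 1 + 1) (by omega)]
  exact (isChain_spineTour 0 _).getElem n hn

lemma map_spineWalk_range (K : ℕ) :
    (List.range (spineTour 0 K).length).map spineWalk = spineTour 0 K :=
  List.ext_getElem (by simp) fun i h _ => by
    simp only [List.getElem_map, List.getElem_range]
    exact spineWalk_eq_getElem _

lemma card_le_three_of_spineWalk_eq (u : List Bool) (s : Finset ℕ)
    (hs : ∀ n ∈ s, spineWalk n = u) : s.card ≤ 3 := by
  set N := (spineTour 0 (s.sup id + 1)).length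
  have hsub : s ⊆ (Finset.range N).filter (spineWalk · = u) := fun n hn =>
    Finset.mem_filter.2 ⟨Finset.mem_range.2 ((Finset.le_sup (f := id) hn).trans_lt
      (lt_length_spineTour _)), hs n hn⟩
  calc s.card ≤ ((Finset.range N).filter (spineWalk · = u)).card := Finset.card_le_card hsub
    _ = ((List.range N).map spineWalk).count u := by
      rw [← Nat.count_eq_card_filter_range, Nat.count, List.count_eq_countP, List.countP_map]
      simp only [Function.comp_def, beq_eq_decide]
    _ ≤ 3 := by rw [map_spineWalk_range]; exact count_spineTour_le 0 _ u

lemma length_spineWalk_le (n : ℕ) : (spineWalk n).length ≤ 2 * Nat.log 2 n + 4 := by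
  have hn : n < (spineTour 0 (Nat.log 2 n + 2)).length :=
    (Nat.lt_pow_succ_log_self one_lt_two n).trans_le
      (by simpa using length_spineTour 0 (Nat.log 2 n + 1))
  rw [spineWalk_eq_getElem hn]
  exact (length_le_of_mem_spineTour _ (List.getElem_mem hn)).trans (by omega)

def zWalk : ℤ → Bool × List Bool
  | .ofNat n => (true, spineWalk n)
  | .negSucc n => (false, spineWalk n)

lemma adj_zWalk_succ : ∀ a : ℤ, graph.Adj (zWalk a) (zWalk (a + 1))
  | .ofNat n => adj_of_wordAdj (wordAdj_spineWalk_succ n) true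
  | .negSucc 0 => adj_parent (false, [])
  | .negSucc (n + 1) => by
    rw [show Int.negSucc (n + 1) + 1 = Int.negSucc n by omega]
    exact adj_of_wordAdj (wordAdj_spineWalk_succ n).symm false

lemma card_le_three_of_zWalk_eq (y : Bool × List Bool) (s : Finset ℤ)
    (hs : ∀ a ∈ s, zWalk a = y) : s.card ≤ 3 := by
  let index : ℤ → ℕ := fun | .ofNat n => n | .negSucc n => n
  have hinj : Set.InjOn index s := by
    rintro (a | a) ha (b | b) hb h
    all_goals have := (hs _ ha).trans (hs _ hb).symm
    all_goals simp_all [zWalk, index]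
  rw [← Finset.card_image_of_injOn hinj]
  refine card_le_three_of_spineWalk_eq y.2 _ fun n hn => ?_
  obtain ⟨a | a, ha, rfl⟩ := Finset.mem_image.1 hn
  all_goals simpa [zWalk] using congrArg Prod.snd (hs _ ha)

lemma length_zWalk_le : ∀ b : ℤ, (zWalk b).2.length ≤ 2 * Nat.log 2 b.natAbs + 4
  | .ofNat n => length_spineWalk_le n
  | .negSucc n => (length_spineWalk_le n).trans (by
      have := Nat.log_mono_right (b := 2) n.le_succ
      simp only [Int.natAbs_negSucc]
      omega)

end CubicTree

lemma dist_le_abs_sub_of_dist_succ_le_one {X : Type*} [PseudoMetricSpace X] {f : ℤ → X}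
    (hf : ∀ a, dist (f a) (f (a + 1)) ≤ 1) (a b : ℤ) :
    dist (f a) (f b) ≤ |(a : ℝ) - (b : ℝ)| := by
  wlog hab : a ≤ b generalizing a b
  · rw [dist_comm, abs_sub_comm]
    exact this b a (le_of_not_ge hab)
  obtain ⟨n, rfl⟩ := Int.le.dest hab
  suffices dist (f a) (f (a + n)) ≤ n by simpa using this
  induction n with
  | zero => simp
  | succ n ih =>
    calc dist (f a) (f (a + (n + 1 : ℕ)))
        ≤ dist (f a) (f (a + n)) + dist (f (a + n)) (f (a + n + 1)) := by
          push_cast; rw [← add_assoc]; exact dist_triangle ..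
      _ ≤ n + 1 := add_le_add (ih (by omega)) (hf _)
      _ = (n + 1 : ℕ) := by push_cast; ring

lemma natLog_two_le_two_mul_log_one_add (m : ℕ) :
    (Nat.log 2 m : ℝ) ≤ 2 * Real.log (1 + m) := by
  rcases m.eq_zero_or_pos with rfl | hm
  · simp
  have hlog2 : (1 / 2 : ℝ) ≤ Real.log 2 := by linarith [Real.log_two_gt_d9]
  have hlogm : 0 ≤ Real.log m := Real.log_nonneg (by exact_mod_cast hm)
  calc (Nat.log 2 m : ℝ) ≤ Real.logb 2 m := by exact_mod_cast Real.natLog_le_logb m 2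
    _ = Real.log m / Real.log 2 := rfl
    _ ≤ 2 * Real.log m := by
      rw [div_le_iff₀ (by linarith)]
      nlinarith
    _ ≤ 2 * Real.log (1 + m) := by gcongr; linarith

/-- There is a 1-Lipschitz (with respect to `|a − b|`) map `W : ℤ → T₃`
with at most 3 preimages per vertex, satisfying `d(W 0, W b) ≤ C·log(1 + |b|) + C`. -/
theorem exists_log_distorted_walk_Z_to_T3
    (T : Type*) [MetricSpace T] (hT : IsCubicTreeMetric T) :
    ∃ (W : ℤ → T) (C : ℝ),
      (∀ a b : ℤ, dist (W a) (W b) ≤ |(a : ℝ) - (b : ℝ)|) ∧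
      (∀ t : T, ∀ s : Finset ℤ, (∀ a ∈ s, W a = t) → s.card ≤ 3) ∧
      ∀ b : ℤ, dist (W 0) (W b) ≤ C * Real.log (1 + |(b : ℝ)|) + C := by
  obtain ⟨G, hconn, hacyc, hdeg, hdist⟩ := hT
  have : Nonempty T := hconn.nonempty
  obtain ⟨f, hf⟩ := CubicTree.exists_injective_hom hacyc fun v => by
    simpa [hdeg v] using Set.ncard_le_encard (G.neighborSet v)
  have hstep : ∀ u v, CubicTree.graph.Adj u v → dist (f u) (f v) ≤ 1 := fun u v h => by
    rw [hdist, SimpleGraph.dist_eq_one_iff_adj.2 (f.map_adj h), Nat.cast_one]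
  refine ⟨f ∘ CubicTree.zWalk, 5, dist_le_abs_sub_of_dist_succ_le_one fun a =>
    hstep _ _ (CubicTree.adj_zWalk_succ a), fun t s hs => ?_, fun b => ?_⟩
  · rcases s.eq_empty_or_nonempty with rfl | ⟨a₀, ha₀⟩
    · simp
    · exact CubicTree.card_le_three_of_zWalk_eq _ s fun a ha =>
        hf ((hs a ha).trans (hs a₀ ha₀).symm)
  · have hlog := natLog_two_le_two_mul_log_one_add b.natAbs
    rw [Nat.cast_natAbs, Int.cast_abs] at hlog
    have hlen : ((CubicTree.zWalk b).2.length : ℝ) ≤ 2 * Nat.log 2 b.natAbs + 4 := by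
      exact_mod_cast CubicTree.length_zWalk_le b
    have hpos : 0 ≤ Real.log (1 + |(b : ℝ)|) :=
      Real.log_nonneg (by linarith [abs_nonneg (b : ℝ)])
    calc dist (f (CubicTree.zWalk 0)) (f (CubicTree.zWalk b))
        ≤ (CubicTree.zWalk b).2.length + 1 := CubicTree.dist_root_le hstep _
      _ ≤ 5 * Real.log (1 + |(b : ℝ)|) + 5 := by linarith
end

section
/- Let 𝒰 and 𝒱 be covers of a metric space X and suppose there is a constant D ≥ 1 such that for every V ∈ 𝒱 there is some U_V ∈ 𝒰 with V ⊆ N^D_D(U_V), where the iterated neighbourhoods of members of 𝒰 are taken with respect to 𝒰. Then for every m ≥ 0 and s ≥ 1 there exist m' ≥ 0 and s' ≥ 1 such that N^m_s(V) ⊆ N^{m'}_{s'}(U_V) for every V ∈ 𝒱, where N^m_s(V) is taken with respect to 𝒱 and N^{m'}_{s'}(U_V) with respect to 𝒰. -/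
open Metric Set

/-! The relation "`Y'` meets the closed `s`-neighbourhood of `Y`" is symmetric, so a chain of
members of `𝒴` leading from `Y` to a point `x` can be run backwards from `x` to `Y`. Hence if
`V ⊆ N^D(U')` and `V` comes within `s` of `N^k(U)`, then `U' ⊆ N^{D+1}(N^k(U))` and
`V ⊆ N^{2D+1}(N^k(U))`: one `𝒱`-step costs at most `2D + 1` steps with respect to `𝒰`,
once the radius is at least `max s D`. -/

section IterNbhd

variable {X : Type*} [MetricSpace X] {𝒴 : Set (Set X)} {s : ℝ}

theorem mem_iterNbhd_succ {m : ℕ} {Y : Set X} {p : X} :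
    p ∈ iterNbhd 𝒴 s (m + 1) Y ↔
      ∃ Y' ∈ 𝒴, p ∈ Y' ∧ ∃ x ∈ Y', ∃ z ∈ iterNbhd 𝒴 s m Y, dist x z ≤ s := by
  simp only [iterNbhd, mem_sUnion, mem_ofPred_eq]
  grind

theorem subset_iterNbhd_succ {m : ℕ} {Y Y' : Set X} (hY' : Y' ∈ 𝒴) {x z : X} (hx : x ∈ Y')
    (hz : z ∈ iterNbhd 𝒴 s m Y) (hxz : dist x z ≤ s) : Y' ⊆ iterNbhd 𝒴 s (m + 1) Y :=
  fun _ hp => mem_iterNbhd_succ.2 ⟨Y', hY', hp, x, hx, z, hz, hxz⟩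

theorem iterNbhd_mono (m : ℕ) : Monotone (iterNbhd 𝒴 s m) := by
  induction m with
  | zero => exact fun _ _ h => h
  | succ m ih =>
    intro Y Z hYZ p hp
    obtain ⟨Y', hY', hp, x, hx, z, hz, hxz⟩ := mem_iterNbhd_succ.1 hp
    exact subset_iterNbhd_succ hY' hx (ih hYZ hz) hxz hp

theorem iterNbhd_mono_radius {t : ℝ} (hst : s ≤ t) (m : ℕ) (Y : Set X) :
    iterNbhd 𝒴 s m Y ⊆ iterNbhd 𝒴 t m Y := by
  induction m with
  | zero => exact subset_rfl
  | succ m ih =>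
    intro p hp
    obtain ⟨Y', hY', hp, x, hx, z, hz, hxz⟩ := mem_iterNbhd_succ.1 hp
    exact subset_iterNbhd_succ hY' hx (ih hz) (hxz.trans hst) hp

theorem iterNbhd_add (a b : ℕ) (Y : Set X) :
    iterNbhd 𝒴 s (a + b) Y = iterNbhd 𝒴 s a (iterNbhd 𝒴 s b Y) := by
  induction a with
  | zero => rw [Nat.zero_add]; rfl
  | succ a ih => rw [Nat.add_right_comm]; simp only [iterNbhd, ih]

theorem subset_iterNbhd_succ_of_mem_iterNbhd {a : ℕ} {Y A : Set X} (hY : Y ∈ 𝒴) {x z : X}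
    (hx : x ∈ iterNbhd 𝒴 s a Y) (hz : z ∈ A) (hxz : dist x z ≤ s) :
    Y ⊆ iterNbhd 𝒴 s (a + 1) A := by
  induction a generalizing A x z with
  | zero => exact subset_iterNbhd_succ hY hx hz hxz
  | succ a ih =>
    obtain ⟨Y', hY', hxY', y, hy, w, hw, hyw⟩ := mem_iterNbhd_succ.1 hx
    have hY'A : Y' ⊆ iterNbhd 𝒴 s 1 A := subset_iterNbhd_succ hY' hxY' hz hxz
    have hYY' : Y ⊆ iterNbhd 𝒴 s (a + 1) Y' := ih hw hy (by rwa [dist_comm])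
    rw [iterNbhd_add]
    exact hYY'.trans (iterNbhd_mono _ hY'A)

theorem iterNbhd_subset_iterNbhd_of_subset_iterNbhd {𝒰 𝒱 : Set (Set X)} {r t : ℝ} {n : ℕ}
    (hVU : ∀ V ∈ 𝒱, ∃ U ∈ 𝒰, V ⊆ iterNbhd 𝒰 r n U) (hrt : r ≤ t) (hst : s ≤ t)
    (m : ℕ) (A : Set X) :
    iterNbhd 𝒱 s m A ⊆ iterNbhd 𝒰 t (m * (2 * n + 1)) A := by
  induction m with
  | zero => rw [zero_mul]; exact fun _ hp => hp
  | succ m ih =>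
    intro p hp
    obtain ⟨V, hV, hp, x, hx, z, hz, hxz⟩ := mem_iterNbhd_succ.1 hp
    obtain ⟨U, hU, hVUr⟩ := hVU V hV
    have hVU : V ⊆ iterNbhd 𝒰 t n U := hVUr.trans (iterNbhd_mono_radius hrt n U)
    have hU : U ⊆ iterNbhd 𝒰 t (n + 1) (iterNbhd 𝒰 t (m * (2 * n + 1)) A) :=
      subset_iterNbhd_succ_of_mem_iterNbhd hU (hVU hx) (ih hz) (hxz.trans hst)
    have hV : V ⊆ iterNbhd 𝒰 t (n + (n + 1) + m * (2 * n + 1)) A := by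
      rw [iterNbhd_add, iterNbhd_add]
      exact hVU.trans (iterNbhd_mono n hU)
    rw [show (m + 1) * (2 * n + 1) = n + (n + 1) + m * (2 * n + 1) by ring]
    exact hV hp

end IterNbhd

theorem iterNbhd_change_of_cover_general
    (X : Type*) [MetricSpace X] (𝒰 𝒱 : Set (Set X))
    (D : ℕ)
    (hVU : ∀ V ∈ 𝒱, ∃ U ∈ 𝒰, V ⊆ iterNbhd 𝒰 (D : ℝ) D U) :
    ∀ (m : ℕ) (s : ℝ), 1 ≤ s → ∃ (m' : ℕ) (s' : ℝ), 1 ≤ s' ∧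
      ∀ V ∈ 𝒱, ∀ U ∈ 𝒰, V ⊆ iterNbhd 𝒰 (D : ℝ) D U →
        iterNbhd 𝒱 s m V ⊆ iterNbhd 𝒰 s' m' U := by
  intro m s hs
  have hDs : (D : ℝ) ≤ max s D := le_max_right s D
  refine ⟨m * (2 * D + 1) + D, max s D, hs.trans (le_max_left s D), fun V _ U _ hV => ?_⟩
  rw [iterNbhd_add]
  calc iterNbhd 𝒱 s m V ⊆ iterNbhd 𝒰 (max s D) (m * (2 * D + 1)) V :=
        iterNbhd_subset_iterNbhd_of_subset_iterNbhd hVU hDs (le_max_left s D) m V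
    _ ⊆ _ := iterNbhd_mono _ (hV.trans (iterNbhd_mono_radius hDs D U))

/-- If every member of a cover `𝒱` is contained in `N^D_D(U)` for some
member `U` of a cover `𝒰`, then iterated neighbourhoods with respect to `𝒱` are contained in
iterated neighbourhoods with respect to `𝒰` in a controlled way. -/
theorem iterNbhd_change_of_cover
    (X : Type*) [MetricSpace X] (𝒰 𝒱 : Set (Set X))
    (h𝒰 : ∀ x : X, ∃ U ∈ 𝒰, x ∈ U) (h𝒱 : ∀ x : X, ∃ V ∈ 𝒱, x ∈ V)
    (D : ℕ) (hD : 1 ≤ D)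
    (hVU : ∀ V ∈ 𝒱, ∃ U ∈ 𝒰, V ⊆ iterNbhd 𝒰 (D : ℝ) D U) :
    ∀ (m : ℕ) (s : ℝ), 1 ≤ s → ∃ (m' : ℕ) (s' : ℝ), 1 ≤ s' ∧
      ∀ V ∈ 𝒱, ∀ U ∈ 𝒰, V ⊆ iterNbhd 𝒰 (D : ℝ) D U →
        iterNbhd 𝒱 s m V ⊆ iterNbhd 𝒰 s' m' U :=
  iterNbhd_change_of_cover_general X 𝒰 𝒱 D hVU
end
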